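/- Consider the linear diffusive-dispersive augmented system u*(v)_t + f*(v)_x = ε B v_{xx} + ε² K v_{xxx} with B, K constant N×N matrices, K symmetric. Then every C³ solution v(t,x) satisfies the exact entropy balance U*(v)_t + ( F*(v) − ε vᵀ B v_x + (ε²/2)(3 v_xᵀ K v_x − (vᵀ K v)_{xx}) )_x = −(ε/2) v_xᵀ (B + Bᵀ) v_x. In particular, if B + Bᵀ is positive semidefinite the right-hand side is ≤ 0. -/

import Mathlib

open Matrix

/-! Contract the equation with `v`. The duality relations turn `v ⬝ (u*(v)_t + f*(v)_x)` into
`U*(v)_t + F*(v)_x`. On the right, `v ⬝ B v_xx = (v ⬝ B v_x)_x - v_x ⬝ B v_x`, and for symmetric `K`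
the dispersive term is an exact derivative, `v ⬝ K v_xxx = -½ (3 v_x ⬝ K v_x - (v ⬝ K v)_xx)_x`;
only the quadratic form `v_x ⬝ B v_x = ½ v_x ⬝ (B + Bᵀ) v_x` survives. -/

theorem Matrix.IsSymm.dotProduct_mulVec_comm {α ι : Type*} [CommSemiring α] [Fintype ι]
    {K : Matrix ι ι α} (hK : K.IsSymm) (x y : ι → α) : x ⬝ᵥ K *ᵥ y = y ⬝ᵥ K *ᵥ x := by
  rw [← dotProduct_transpose_mulVec, hK.eq]

theorem Matrix.dotProduct_add_transpose_mulVec_self {α ι : Type*} [CommSemiring α] [Fintype ι]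
    (B : Matrix ι ι α) (x : ι → α) : x ⬝ᵥ (B + Bᵀ) *ᵥ x = 2 * (x ⬝ᵥ B *ᵥ x) := by
  rw [add_mulVec, dotProduct_add, dotProduct_transpose_mulVec, two_mul]

section Calculus

variable {𝕜 ι : Type*} [NontriviallyNormedField 𝕜] [Fintype ι]

theorem HasDerivAt.dotProduct_mulVec (M : Matrix ι ι 𝕜) {f g : 𝕜 → ι → 𝕜} {f' g' : ι → 𝕜}
    {x : 𝕜} (hf : HasDerivAt f f' x) (hg : HasDerivAt g g' x) :
    HasDerivAt (fun y => f y ⬝ᵥ M *ᵥ g y) (f' ⬝ᵥ M *ᵥ g x + f x ⬝ᵥ M *ᵥ g') x := by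
  rw [hasDerivAt_pi] at hf hg
  have := HasDerivAt.fun_sum (u := Finset.univ) fun i _ =>
    (hf i).mul (HasDerivAt.fun_sum (u := Finset.univ) fun j _ => (hg j).const_mul (M i j))
  simpa [dotProduct, mulVec, Finset.sum_add_distrib] using this

theorem deriv_comp_eq_dotProduct_of_fderiv_eq {U : (ι → 𝕜) → 𝕜} {u : (ι → 𝕜) → ι → 𝕜}
    (hdual : ∀ w x, fderiv 𝕜 U w x = ∑ i, w i * fderiv 𝕜 u w x i) {γ : 𝕜 → ι → 𝕜} {s : 𝕜}
    (hU : DifferentiableAt 𝕜 U (γ s)) (hu : DifferentiableAt 𝕜 u (γ s))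
    (hγ : DifferentiableAt 𝕜 γ s) :
    deriv (fun r => U (γ r)) s = γ s ⬝ᵥ deriv (fun r => u (γ r)) s := by
  have hUγ : HasDerivAt (fun r => U (γ r)) (fderiv 𝕜 U (γ s) (deriv γ s)) s :=
    hU.hasFDerivAt.comp_hasDerivAt s hγ.hasDerivAt
  have huγ : HasDerivAt (fun r => u (γ r)) (fderiv 𝕜 u (γ s) (deriv γ s)) s :=
    hu.hasFDerivAt.comp_hasDerivAt s hγ.hasDerivAt
  rw [hUγ.deriv, huγ.deriv, hdual]
  rfl

theorem hasDerivAt_dispersive_flux {K : Matrix ι ι 𝕜} (hK : K.IsSymm) {γ : 𝕜 → ι → 𝕜}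
    (hγ : ContDiff 𝕜 3 γ) (x : 𝕜) :
    HasDerivAt (fun y => 3 * (deriv γ y ⬝ᵥ K *ᵥ deriv γ y)
        - deriv (deriv fun z => γ z ⬝ᵥ K *ᵥ γ z) y)
      (-2 * (γ x ⬝ᵥ K *ᵥ deriv (deriv (deriv γ)) x)) x := by
  have h0 : ∀ y, HasDerivAt γ (deriv γ y) y := fun y =>
    (hγ.differentiable (by norm_num) y).hasDerivAt
  have h1 : ∀ y, HasDerivAt (deriv γ) (deriv (deriv γ) y) y := fun y =>
    ((ContDiff.iterate_deriv' 2 1 hγ).differentiable (by norm_num) y).hasDerivAt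
  have h2 : HasDerivAt (deriv (deriv γ)) (deriv (deriv (deriv γ)) x) x :=
    ((ContDiff.iterate_deriv' 1 2 hγ).differentiable (by norm_num) x).hasDerivAt
  have hq' : deriv (fun z => γ z ⬝ᵥ K *ᵥ γ z)
      = fun z => deriv γ z ⬝ᵥ K *ᵥ γ z + γ z ⬝ᵥ K *ᵥ deriv γ z :=
    funext fun z => ((h0 z).dotProduct_mulVec K (h0 z)).deriv
  have hq'' : deriv (deriv fun z => γ z ⬝ᵥ K *ᵥ γ z)
      = fun z => (deriv (deriv γ) z ⬝ᵥ K *ᵥ γ z + deriv γ z ⬝ᵥ K *ᵥ deriv γ z)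
          + (deriv γ z ⬝ᵥ K *ᵥ deriv γ z + γ z ⬝ᵥ K *ᵥ deriv (deriv γ) z) := by
    rw [hq']
    exact funext fun z =>
      (((h1 z).dotProduct_mulVec K (h0 z)).add ((h0 z).dotProduct_mulVec K (h1 z))).deriv
  rw [hq'']
  refine ((((h1 x).dotProduct_mulVec K (h1 x)).const_mul 3).sub
    (((h2.dotProduct_mulVec K (h0 x)).add ((h1 x).dotProduct_mulVec K (h1 x))).add
      (((h1 x).dotProduct_mulVec K (h1 x)).add ((h0 x).dotProduct_mulVec K h2)))).congr_deriv ?_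
  rw [hK.dotProduct_mulVec_comm (deriv (deriv γ) x),
    hK.dotProduct_mulVec_comm (deriv (deriv (deriv γ)) x)]
  ring

end Calculus

/-- Proposition 1 (LeFloch–Tesdall): for the linear diffusive-dispersive augmented
system `u*(v)_t + f*(v)_x = ε B v_{xx} + ε² K v_{xxx}` with constant matrices `B, K`,
`K` symmetric, every C³ solution `v(t,x)` satisfies the exact entropy balance
`U*(v)_t + ( F*(v) − ε vᵀ B v_x + (ε²/2)(3 v_xᵀ K v_x − (vᵀ K v)_{xx}) )_x
  = −(ε/2) v_xᵀ (B + Bᵀ) v_x`,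
and if `B + Bᵀ` is positive semidefinite, the right-hand side is `≤ 0`.
The entropy structure is encoded by the duality relations
`DU*(w)·x = wᵀ (Du*(w)·x)` and `DF*(w)·x = wᵀ (Df*(w)·x)`. -/
theorem linear_diffusion_dispersion_entropy_balance {N : ℕ}
    (ustar fstar : (Fin N → ℝ) → Fin N → ℝ)
    (Ustar Fstar : (Fin N → ℝ) → ℝ)
    (hustar : ContDiff ℝ 1 ustar) (hfstar : ContDiff ℝ 1 fstar)
    (hUstar : ContDiff ℝ 1 Ustar) (hFstar : ContDiff ℝ 1 Fstar)
    (hdualU : ∀ w x, fderiv ℝ Ustar w x = ∑ i, w i * fderiv ℝ ustar w x i)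
    (hdualF : ∀ w x, fderiv ℝ Fstar w x = ∑ i, w i * fderiv ℝ fstar w x i)
    (B K : Matrix (Fin N) (Fin N) ℝ) (hK : K.IsSymm)
    (ε : ℝ) (hε : 0 < ε)
    (v : ℝ → ℝ → Fin N → ℝ)
    (hv : ContDiff ℝ 3 (fun p : ℝ × ℝ => v p.1 p.2))
    (hPDE : ∀ t x, deriv (fun s => ustar (v s x)) t + deriv (fun y => fstar (v t y)) x
      = ε • B.mulVec (deriv (deriv (v t)) x)
        + ε ^ 2 • K.mulVec (deriv (deriv (deriv (v t))) x)) :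
    (∀ t x,
      deriv (fun s => Ustar (v s x)) t
        + deriv (fun y => Fstar (v t y)
            - ε * (v t y ⬝ᵥ B.mulVec (deriv (v t) y))
            + ε ^ 2 / 2 * (3 * (deriv (v t) y ⬝ᵥ K.mulVec (deriv (v t) y))
                - deriv (deriv (fun z => v t z ⬝ᵥ K.mulVec (v t z))) y)) x
      = -(ε / 2) * (deriv (v t) x ⬝ᵥ (B + Bᵀ).mulVec (deriv (v t) x)))
    ∧ ((B + Bᵀ).PosSemidef → ∀ t x,
        -(ε / 2) * (deriv (v t) x ⬝ᵥ (B + Bᵀ).mulVec (deriv (v t) x)) ≤ 0) := by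
  refine ⟨fun t x => ?_, fun hB t x => ?_⟩
  · have hvt : ContDiff ℝ 3 (v t) := hv.comp (contDiff_const.prodMk contDiff_id)
    have hvx : Differentiable ℝ (fun s => v s x) :=
      (hv.comp (contDiff_id.prodMk contDiff_const)).differentiable (by norm_num)
    have hv0 : Differentiable ℝ (v t) := hvt.differentiable (by norm_num)
    have hv1 : Differentiable ℝ (deriv (v t)) :=
      (ContDiff.iterate_deriv' 2 1 hvt).differentiable (by norm_num)
    have hFx : DifferentiableAt ℝ (fun y => Fstar (v t y)) x :=
      (hFstar.differentiable one_ne_zero _).comp x (hv0 x)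
    have hdiffusion := (hv0 x).hasDerivAt.dotProduct_mulVec B (hv1 x).hasDerivAt
    have hflux := ((hFx.hasDerivAt.fun_sub (hdiffusion.const_mul ε)).fun_add
      ((hasDerivAt_dispersive_flux hK hvt x).const_mul (ε ^ 2 / 2)))
    have hbalance : deriv (fun s => Ustar (v s x)) t + deriv (fun y => Fstar (v t y)) x
        = ε * (v t x ⬝ᵥ B *ᵥ deriv (deriv (v t)) x)
          + ε ^ 2 * (v t x ⬝ᵥ K *ᵥ deriv (deriv (deriv (v t))) x) := by
      rw [deriv_comp_eq_dotProduct_of_fderiv_eq hdualU (hUstar.differentiable one_ne_zero _)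
          (hustar.differentiable one_ne_zero _) (hvx t),
        deriv_comp_eq_dotProduct_of_fderiv_eq hdualF (hFstar.differentiable one_ne_zero _)
          (hfstar.differentiable one_ne_zero _) (hv0 x),
        ← dotProduct_add, hPDE, dotProduct_add, dotProduct_smul, dotProduct_smul, smul_eq_mul,
        smul_eq_mul]
    rw [hflux.deriv, dotProduct_add_transpose_mulVec_self]
    linear_combination hbalance
  · have hquad := hB.dotProduct_mulVec_nonneg (deriv (v t) x)
    rw [star_trivial] at hquad
    exact mul_nonpos_of_nonpos_of_nonneg (by linarith) hquad
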